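/- Let β ∈ (0, 1/2) with β ≠ 1/3, set c = cos(2πβ), let n ∈ ℕ, and let ω ∈ Ĩⁿ(β) with ω ≠ ωₙ*. Set u₀ = 1 + r_β(ω)·√(2 + 2c), v₀ = 3·cos(ωL), v₀' = (ω/sin(ωL))·(u₀ − v₀·cos(ωL)). Then the set {t ∈ [0, L) : v₀·ω·sin(ω(L − t)) + (v₀'/2)·cos(ω(L − t)) = 0} ∪ {t ∈ [L, 2L) : −v₀·cos(ω(2L − t)) + u₀·cos(ω(t − L)) = 0}, i.e. the set of zeros in [0, 2L) of the piecewise derivative of the characteristic function φ (with φ(s) = v₀·cos(ω(L − s)) − (v₀'/(2ω))·sin(ω(L − s)) on [0, L] and φ(s) = (1/sin(ωL))·(v₀·sin(ω(2L − s)) + u₀·sin(ω(s − L))) on [L, 2L]), has exactly 2n+1 elements. (These 2n+1 points are exactly the cut positions t for which λ = ω² is a Neumann edge-state eigenvalue of the zigzag-truncated hexagonal graph.) -/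

import Mathlib

open Real

/-- The edge length `L = 1/√3`. -/
noncomputable def L : ℝ := 1 / Real.sqrt 3

/-- The Dirac frequency `ωₙ* = (2n+1)π/(2L)`. -/
noncomputable def ωstar (n : ℕ) : ℝ := (2 * n + 1) * π / (2 * L)

/-- `g_β(ω) = (9·cos²(ωL) − 3 − 2·cos(2πβ)) / √(2 + 2·cos(2πβ))`. -/
noncomputable def g (β ω : ℝ) : ℝ :=
  (9 * Real.cos (ω * L) ^ 2 - 3 - 2 * Real.cos (2 * π * β)) /
    Real.sqrt (2 + 2 * Real.cos (2 * π * β))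

/-- `a(β) = arccos(√(3 + 2·cos(2πβ) − 2·√(2 + 2·cos(2πβ)))/3)`. -/
noncomputable def aβ (β : ℝ) : ℝ :=
  Real.arccos (Real.sqrt (3 + 2 * Real.cos (2 * π * β) -
    2 * Real.sqrt (2 + 2 * Real.cos (2 * π * β))) / 3)

/-- The open interval `Ĩⁿ(β) = (nπ/L + a(β)/L, (n+1)π/L − a(β)/L)`. -/
noncomputable def Itilde (β : ℝ) (n : ℕ) : Set ℝ :=
  Set.Ioo (n * π / L + aβ β / L) ((n + 1) * π / L - aβ β / L)

/-- `r_β(ω) = (g_β(ω) + √(g_β(ω)² − 4))/2`. -/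
noncomputable def r (β ω : ℝ) : ℝ := (g β ω + Real.sqrt (g β ω ^ 2 - 4)) / 2

/-- `u₀ = 1 + r_β(ω)·√(2 + 2·cos(2πβ))`. -/
noncomputable def u₀ (β ω : ℝ) : ℝ :=
  1 + r β ω * Real.sqrt (2 + 2 * Real.cos (2 * π * β))

/-- `v₀ = 3·cos(ωL)`. -/
noncomputable def v₀ (ω : ℝ) : ℝ := 3 * Real.cos (ω * L)

/-- `v₀' = (ω/sin(ωL))·(u₀ − v₀·cos(ωL))`. -/
noncomputable def v₀' (β ω : ℝ) : ℝ :=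
  (ω / Real.sin (ω * L)) * (u₀ β ω - v₀ ω * Real.cos (ω * L))

/-!
Write `T = ωL`. Each of the two equations has the form `a sin x + b cos x = 0`, i.e.
`sin (x - arctan (-b / a)) = 0`: after rescaling, the first is solved for `x ∈ (0, T]` with angle
`arctan (-k / 2)` and the second for `x ∈ [0, T)` with angle `arctan k`, where `k = v₀' / (v₀ ω)`.
The window `Ĩⁿ(β)` gives `9 cos² T < 3 + 2 cos (2πβ)`, hence `g_β(ω) ≤ 0` and `u₀ ∈ [-1, 1]`,
and this is what places `T - θ` in `(nπ, (n+1)π)` for both angles `θ`. Each equation then has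
`n` roots, plus one more if its angle is positive (resp. nonnegative); as `arctan (-k / 2) > 0`
exactly when `arctan k < 0`, precisely one of them gets the extra root.
-/

open Set

lemma encard_setOf_sin_sub_eq_zero (θ : ℝ) (s : Set ℝ) :
    {x ∈ s | sin (x - θ) = 0}.encard = {k : ℤ | θ + k * π ∈ s}.encard := by
  have hinj : Function.Injective fun k : ℤ => θ + k * π := fun j k h => by
    simpa [pi_ne_zero] using h
  rw [← encard_preimage_of_injective_subset_range hinj]
  · congr 1
    ext k
    simp [sin_int_mul_pi]
  · rintro x ⟨-, hx⟩
    obtain ⟨k, hk⟩ := sin_eq_zero_iff.1 hx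
    exact ⟨k, by simp only; linarith⟩

lemma encard_setOf_sin_sub_eq_zero_Ioc (θ a b : ℝ) :
    {x ∈ Ioc a b | sin (x - θ) = 0}.encard = (⌊(b - θ) / π⌋ - ⌊(a - θ) / π⌋).toNat := by
  have : {k : ℤ | θ + k * π ∈ Ioc a b} = Finset.Ioc ⌊(a - θ) / π⌋ ⌊(b - θ) / π⌋ := by
    ext k
    simp only [mem_ofPred_eq, mem_Ioc, Finset.coe_Ioc, Int.floor_lt, Int.le_floor,
      div_lt_iff₀ pi_pos, le_div_iff₀ pi_pos]
    constructor <;> rintro ⟨h₁, h₂⟩ <;> constructor <;> linarith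
  rw [encard_setOf_sin_sub_eq_zero, this, encard_coe_eq_coe_finsetCard, Int.card_Ioc]

lemma encard_setOf_sin_sub_eq_zero_Ico (θ a b : ℝ) :
    {x ∈ Ico a b | sin (x - θ) = 0}.encard = (⌈(b - θ) / π⌉ - ⌈(a - θ) / π⌉).toNat := by
  have : {k : ℤ | θ + k * π ∈ Ico a b} = Finset.Ico ⌈(a - θ) / π⌉ ⌈(b - θ) / π⌉ := by
    ext k
    simp only [mem_ofPred_eq, mem_Ico, Finset.coe_Ico, Int.ceil_le, Int.lt_ceil,
      div_le_iff₀ pi_pos, lt_div_iff₀ pi_pos]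
    constructor <;> rintro ⟨h₁, h₂⟩ <;> constructor <;> linarith
  rw [encard_setOf_sin_sub_eq_zero, this, encard_coe_eq_coe_finsetCard, Int.card_Ico]

section
variable {θ T : ℝ} {n : ℕ}

lemma floor_div_pi_eq {y : ℝ} {j : ℤ} (hy : y ∈ Ioo (j * π) ((j + 1) * π)) : ⌊y / π⌋ = j :=
  Int.floor_eq_iff.2 ⟨(le_div_iff₀ pi_pos).2 hy.1.le, (div_lt_iff₀ pi_pos).2 hy.2⟩

lemma ceil_div_pi_eq {y : ℝ} {j : ℤ} (hy : y ∈ Ioo ((j - 1) * π) (j * π)) : ⌈y / π⌉ = j :=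
  Int.ceil_eq_iff.2 ⟨(lt_div_iff₀ pi_pos).2 hy.1, (div_le_iff₀ pi_pos).2 hy.2.le⟩

lemma encard_setOf_sin_sub_eq_zero_Ioc_zero (hθ : θ ∈ Ioo (-π) π)
    (hT : T - θ ∈ Ioo (n * π) ((n + 1) * π)) :
    {x ∈ Ioc 0 T | sin (x - θ) = 0}.encard = if 0 < θ then n + 1 else n := by
  rw [encard_setOf_sin_sub_eq_zero_Ioc, floor_div_pi_eq (j := n) (by exact_mod_cast hT)]
  split_ifs with h
  · rw [floor_div_pi_eq (j := -1) ⟨by push_cast; linarith [hθ.2], by push_cast; linarith⟩]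
    simp
  · rw [Int.floor_eq_zero_iff.2 ⟨div_nonneg (by linarith) pi_pos.le,
      (div_lt_one pi_pos).2 (by linarith [hθ.1])⟩]
    simp

lemma encard_setOf_sin_sub_eq_zero_Ico_zero (hθ : θ ∈ Ioo (-π) π)
    (hT : T - θ ∈ Ioo (n * π) ((n + 1) * π)) :
    {x ∈ Ico 0 T | sin (x - θ) = 0}.encard = if 0 ≤ θ then n + 1 else n := by
  rw [encard_setOf_sin_sub_eq_zero_Ico, ceil_div_pi_eq (j := n + 1) (by push_cast; simpa using hT)]
  split_ifs with h
  · rw [Int.ceil_eq_zero_iff.2 ⟨(lt_div_iff₀ pi_pos).2 (by linarith [hθ.2]),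
      div_nonpos_of_nonpos_of_nonneg (by linarith) pi_pos.le⟩]
    simp
  · rw [ceil_div_pi_eq (j := 1) ⟨by push_cast; linarith, by push_cast; linarith [hθ.1]⟩]
    simp
end

lemma mem_Ioo_zero_pi_of_sin_pos {y : ℝ} (h₁ : -π < y) (h₂ : y < 2 * π) (hy : 0 < sin y) :
    y ∈ Ioo 0 π := by
  refine ⟨lt_of_not_ge fun h => ?_, lt_of_not_ge fun h => ?_⟩
  · linarith [sin_nonpos_of_nonpos_of_neg_pi_le h h₁.le]
  · have := sin_nonneg_of_nonneg_of_le_pi (x := y - π) (by linarith) (by linarith)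
    rw [sin_sub_pi] at this
    linarith

lemma sin_arctan_eq_mul_cos_arctan (μ : ℝ) : sin (arctan μ) = μ * cos (arctan μ) := by
  rw [sin_arctan, cos_arctan]
  ring

lemma sub_arctan_mem_Ioo {T μ : ℝ} {n : ℕ} (hT : T ∈ Ioo (n * π) ((n + 1) * π))
    (h : μ * (sin T * cos T) < sin T ^ 2) :
    T - arctan μ ∈ Ioo (n * π) ((n + 1) * π) := by
  have hx : 0 < sin (T - n * π) := sin_pos_of_pos_of_lt_pi (by linarith [hT.1]) (by linarith [hT.2])
  have key : sin (T - n * π) * sin (T - arctan μ - n * π) =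
      cos (arctan μ) * (sin T ^ 2 - μ * (sin T * cos T)) := by
    have hsq : ((-1 : ℝ) ^ n) ^ 2 = 1 := by rw [← pow_mul, mul_comm, pow_mul]; simp
    rw [sin_sub_nat_mul_pi, sin_sub_nat_mul_pi, sin_sub, sin_arctan_eq_mul_cos_arctan]
    linear_combination (sin T * (sin T * cos (arctan μ) - cos T * (μ * cos (arctan μ)))) * hsq
  have hy := mem_Ioo_zero_pi_of_sin_pos (y := T - arctan μ - n * π)
    (by linarith [hT.1, arctan_lt_pi_div_two μ, pi_pos])
    (by linarith [hT.2, neg_pi_div_two_lt_arctan μ, pi_pos])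
    (pos_of_mul_pos_right (key ▸ mul_pos (cos_arctan_pos μ) (by linarith)) hx.le)
  constructor <;> linarith [hy.1, hy.2]

lemma sin_sub_arctan_eq_zero_iff {a b : ℝ} (ha : a ≠ 0) (x : ℝ) :
    sin (x - arctan (-(b / a))) = 0 ↔ a * sin x + b * cos x = 0 := by
  have : sin (x - arctan (-(b / a))) = cos (arctan (-(b / a))) / a * (a * sin x + b * cos x) := by
    rw [sin_sub, sin_arctan_eq_mul_cos_arctan]
    field_simp
    ring
  rw [this, mul_eq_zero, or_iff_right (div_ne_zero (cos_arctan_pos _).ne' ha)]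

lemma sin_ne_zero_of_mem_Ioo_mul_pi {T : ℝ} {n : ℕ} (hT : T ∈ Ioo (n * π) ((n + 1) * π)) :
    sin T ≠ 0 := fun h => by
  have := sin_pos_of_pos_of_lt_pi (x := T - n * π) (by linarith [hT.1]) (by linarith [hT.2])
  rw [sin_sub_nat_mul_pi, h, mul_zero] at this
  exact this.false

section ChangeOfVariables
variable {ℓ ω : ℝ}

lemma encard_setOf_Ico_comp_sub (p : ℝ → Prop) (hω : 0 < ω) :
    {t ∈ Ico 0 ℓ | p (ω * (ℓ - t))}.encard = {x ∈ Ioc 0 (ω * ℓ) | p x}.encard := by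
  have hinj : Function.Injective fun t => ω * (ℓ - t) := fun s t h => by
    simpa [hω.ne'] using h
  refine (congrArg encard ?_).trans (encard_preimage_of_injective_subset_range hinj ?_)
  · ext t
    simp only [mem_preimage, mem_ofPred_eq, mem_Ico, mem_Ioc, mul_pos_iff_of_pos_left hω, sub_pos,
      mul_le_mul_iff_right₀ hω, sub_le_self_iff]
    tauto
  · intro x _
    exact ⟨ℓ - x / ω, by field_simp; ring⟩

lemma encard_setOf_Ico_comp_sub_left (p : ℝ → Prop) (hω : 0 < ω) :
    {t ∈ Ico ℓ (2 * ℓ) | p (ω * (t - ℓ))}.encard = {x ∈ Ico 0 (ω * ℓ) | p x}.encard := by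
  have hinj : Function.Injective fun t => ω * (t - ℓ) := fun s t h => by
    simpa [hω.ne'] using h
  refine (congrArg encard ?_).trans (encard_preimage_of_injective_subset_range hinj ?_)
  · ext t
    simp only [mem_preimage, mem_ofPred_eq, mem_Ico, mul_nonneg_iff_of_pos_left hω, sub_nonneg,
      mul_lt_mul_iff_right₀ hω]
    constructor <;> rintro ⟨⟨h₁, h₂⟩, h₃⟩ <;> exact ⟨⟨h₁, by linarith⟩, h₃⟩
  · intro x _
    exact ⟨ℓ + x / ω, by field_simp; ring⟩

end ChangeOfVariables

lemma arctan_mem_Ioo_neg_pi_pi (x : ℝ) : arctan x ∈ Ioo (-π) π :=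
  ⟨by linarith [neg_pi_div_two_lt_arctan x, pi_pos], by linarith [arctan_lt_pi_div_two x, pi_pos]⟩

lemma neg_one_le_add_sqrt_sq_sub_four_div_two (x : ℝ) : -1 ≤ (x + √(x ^ 2 - 4)) / 2 := by
  rcases le_or_gt (-2) x with hx | hx
  · linarith [sqrt_nonneg (x ^ 2 - 4)]
  · have : -2 - x ≤ √(x ^ 2 - 4) := (le_sqrt (by linarith) (by nlinarith)).2 (by nlinarith)
    linarith

lemma add_sqrt_sq_sub_four_div_two_nonpos {x : ℝ} (hx : x ≤ 0) : (x + √(x ^ 2 - 4)) / 2 ≤ 0 := by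
  have : √(x ^ 2 - 4) ≤ -x := by
    calc √(x ^ 2 - 4) ≤ √(x ^ 2) := sqrt_le_sqrt (by linarith)
      _ = -x := by rw [sqrt_sq_eq_abs, abs_of_nonpos hx]
  linarith

lemma abs_cos_lt_cos_of_mem_Ioo {a T : ℝ} {n : ℕ} (ha : 0 ≤ a)
    (hT : T ∈ Ioo (n * π + a) ((n + 1) * π - a)) : |cos T| < cos a := by
  have hx : |cos T| = |cos (T - n * π)| := by
    rw [cos_sub_nat_mul_pi, abs_mul, abs_pow, abs_neg, abs_one, one_pow, one_mul]
  rw [hx, abs_lt, ← cos_pi_sub]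
  constructor
  · exact cos_lt_cos_of_nonneg_of_le_pi (by linarith [hT.1]) (by linarith) (by linarith [hT.2])
  · exact cos_lt_cos_of_nonneg_of_le_pi ha (by linarith [hT.2]) (by linarith [hT.1])

theorem ncard_zeros_deriv_charFun {ℓ ω u v v' : ℝ} {n : ℕ} (hω : 0 < ω)
    (hT : ω * ℓ ∈ Ioo (n * π) ((n + 1) * π)) (hcos : cos (ω * ℓ) ≠ 0) (hv : v = 3 * cos (ω * ℓ))
    (hv' : v' = ω / sin (ω * ℓ) * (u - v * cos (ω * ℓ)))
    (hu₁ : 9 * cos (ω * ℓ) ^ 2 - 6 < u) (hu₂ : u < 3) :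
    ({t ∈ Ico 0 ℓ | v * ω * sin (ω * (ℓ - t)) + v' / 2 * cos (ω * (ℓ - t)) = 0} ∪
      {t ∈ Ico ℓ (2 * ℓ) | -(v * cos (ω * (2 * ℓ - t))) + u * cos (ω * (t - ℓ)) = 0}).ncard =
      2 * n + 1 := by
  set T := ω * ℓ
  have hsin : sin T ≠ 0 := sin_ne_zero_of_mem_Ioo_mul_pi hT
  have hv₀ : v ≠ 0 := hv ▸ mul_ne_zero three_ne_zero hcos
  set k := (u - v * cos T) / (v * sin T) with hk
  have hleft (x : ℝ) :
      v * ω * sin x + v' / 2 * cos x = 0 ↔ sin (x - arctan (-(k / 2))) = 0 := by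
    rw [show k / 2 = v' / 2 / (v * ω) by rw [hk, hv']; field_simp,
      sin_sub_arctan_eq_zero_iff (mul_ne_zero hv₀ hω.ne')]
  have hright (y : ℝ) :
      -(v * cos (T - y)) + u * cos y = 0 ↔ sin (y - arctan k) = 0 := by
    rw [show k = -((u - v * cos T) / -(v * sin T)) by rw [hk]; field_simp,
      sin_sub_arctan_eq_zero_iff (neg_ne_zero.2 (mul_ne_zero hv₀ hsin)), cos_sub]
    ring_nf
  have hk_mul : k * (sin T * cos T) = (u - 3 * cos T ^ 2) / 3 := by
    rw [hk, hv]; field_simp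
  have hsq := sin_sq_add_cos_sq T
  have hθA : T - arctan (-(k / 2)) ∈ Ioo (n * π) ((n + 1) * π) :=
    sub_arctan_mem_Ioo hT (by linarith)
  have hθB : T - arctan k ∈ Ioo (n * π) ((n + 1) * π) := sub_arctan_mem_Ioo hT (by linarith)
  have hA : {t ∈ Ico 0 ℓ | v * ω * sin (ω * (ℓ - t)) + v' / 2 * cos (ω * (ℓ - t)) = 0}.encard =
      if 0 < arctan (-(k / 2)) then n + 1 else n := by
    rw [encard_setOf_Ico_comp_sub (fun x => v * ω * sin x + v' / 2 * cos x = 0) hω]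
    simp only [hleft]
    exact encard_setOf_sin_sub_eq_zero_Ioc_zero (arctan_mem_Ioo_neg_pi_pi _) hθA
  have hB : {t ∈ Ico ℓ (2 * ℓ) | -(v * cos (ω * (2 * ℓ - t))) + u * cos (ω * (t - ℓ)) = 0}.encard =
      if 0 ≤ arctan k then n + 1 else n := by
    have (t : ℝ) : ω * (2 * ℓ - t) = T - ω * (t - ℓ) := by ring
    simp only [this]
    rw [encard_setOf_Ico_comp_sub_left (fun y => -(v * cos (T - y)) + u * cos y = 0) hω]
    simp only [hright]
    exact encard_setOf_sin_sub_eq_zero_Ico_zero (arctan_mem_Ioo_neg_pi_pi _) hθB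
  rw [ncard_def, encard_union_eq (Ico_disjoint_Ico_same.mono (sep_subset _ _) (sep_subset _ _)),
    hA, hB, ← Nat.cast_add, ENat.toNat_natCast]
  simp only [arctan_pos, arctan_nonneg]
  split_ifs <;> linarith

lemma L_pos : 0 < L := by unfold L; positivity

section Itilde
variable {β ω : ℝ} {n : ℕ}

lemma aβ_nonneg : 0 ≤ aβ β := arccos_nonneg _

lemma mul_L_mem_Ioo_of_mem_Itilde (hω : ω ∈ Itilde β n) :
    ω * L ∈ Ioo (n * π + aβ β) ((n + 1) * π - aβ β) :=
  ⟨(div_lt_iff₀ L_pos).1 (by rw [add_div]; exact hω.1),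
    (lt_div_iff₀ L_pos).1 (by rw [sub_div]; exact hω.2)⟩

lemma nine_mul_cos_sq_lt_of_mem_Itilde (hω : ω ∈ Itilde β n) :
    9 * cos (ω * L) ^ 2 < 3 + 2 * cos (2 * π * β) := by
  set c := cos (2 * π * β)
  have hc := neg_one_le_cos (2 * π * β)
  have hc' := cos_le_one (2 * π * β)
  have hX : √(3 + 2 * c - 2 * √(2 + 2 * c)) ≤ √(3 + 2 * c) :=
    sqrt_le_sqrt (by linarith [sqrt_nonneg (2 + 2 * c)])
  have h3 : √(3 + 2 * c) ≤ 3 := (sqrt_le_left (by norm_num)).2 (by linarith)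
  have hcos_a : cos (aβ β) = √(3 + 2 * c - 2 * √(2 + 2 * c)) / 3 :=
    cos_arccos (by linarith [sqrt_nonneg (3 + 2 * c - 2 * √(2 + 2 * c))]) (by linarith)
  have hlt := abs_cos_lt_cos_of_mem_Ioo aβ_nonneg (mul_L_mem_Ioo_of_mem_Itilde hω)
  rw [hcos_a] at hlt
  have := abs_nonneg (cos (ω * L))
  nlinarith [sq_abs (cos (ω * L)), sq_sqrt (show 0 ≤ 3 + 2 * c by linarith)]

lemma cos_mul_L_ne_zero (hT : ω * L ∈ Ioo (n * π) ((n + 1) * π)) (hωne : ω ≠ ωstar n) :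
    cos (ω * L) ≠ 0 := fun h => hωne <| by
  have hx : ω * L - n * π = π / 2 :=
    injOn_cos ⟨by linarith [hT.1], by linarith [hT.2]⟩ ⟨by positivity, by linarith [pi_pos]⟩
      (by rw [cos_sub_nat_mul_pi, h, mul_zero, cos_pi_div_two])
  rw [ωstar, eq_div_iff (by linarith [L_pos])]
  linarith

lemma u₀_mem_Icc (hg : g β ω ≤ 0) : u₀ β ω ∈ Icc (-1) 1 := by
  have hr₁ := neg_one_le_add_sqrt_sq_sub_four_div_two (g β ω)
  have hr₂ := add_sqrt_sq_sub_four_div_two_nonpos hg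
  set σ := √(2 + 2 * cos (2 * π * β))
  have hσ₀ : 0 ≤ σ := sqrt_nonneg _
  have hσ₂ : σ ≤ 2 := (sqrt_le_left (by norm_num)).2 (by linarith [cos_le_one (2 * π * β)])
  rw [u₀, r]
  constructor <;> nlinarith

end Itilde

theorem stmt_19_general (β : ℝ) (n : ℕ)
    (ω : ℝ) (hω : ω ∈ Itilde β n) (hωne : ω ≠ ωstar n) :
    ({t ∈ Set.Ico (0 : ℝ) L |
        v₀ ω * ω * Real.sin (ω * (L - t)) + (v₀' β ω / 2) * Real.cos (ω * (L - t)) = 0} ∪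
      {t ∈ Set.Ico L (2 * L) |
        -(v₀ ω * Real.cos (ω * (2 * L - t))) + u₀ β ω * Real.cos (ω * (t - L)) = 0}).ncard =
      2 * n + 1 := by
  have hTa := mul_L_mem_Ioo_of_mem_Itilde hω
  have hT : ω * L ∈ Ioo (n * π) ((n + 1) * π) :=
    ⟨by linarith [hTa.1, aβ_nonneg (β := β)], by linarith [hTa.2, aβ_nonneg (β := β)]⟩
  have hcos := nine_mul_cos_sq_lt_of_mem_Itilde hω
  have hu := u₀_mem_Icc (div_nonpos_of_nonpos_of_nonneg (by linarith) (sqrt_nonneg _))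
  have hω₀ : 0 < ω := pos_of_mul_pos_left (hT.1.trans_le' (by positivity)) L_pos.le
  exact ncard_zeros_deriv_charFun hω₀ hT (cos_mul_L_ne_zero hT hωne) rfl rfl
    (by linarith [hu.1, cos_le_one (2 * π * β)]) (by linarith [hu.2])

theorem stmt_19 (β : ℝ) (hβ0 : 0 < β) (hβ1 : β < 1 / 2) (hβ3 : β ≠ 1 / 3) (n : ℕ)
    (ω : ℝ) (hω : ω ∈ Itilde β n) (hωne : ω ≠ ωstar n) :
    ({t ∈ Set.Ico (0 : ℝ) L |
        v₀ ω * ω * Real.sin (ω * (L - t)) + (v₀' β ω / 2) * Real.cos (ω * (L - t)) = 0} ∪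
      {t ∈ Set.Ico L (2 * L) |
        -(v₀ ω * Real.cos (ω * (2 * L - t))) + u₀ β ω * Real.cos (ω * (t - L)) = 0}).ncard =
      2 * n + 1 :=
  stmt_19_general β n ω hω hωne
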